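/- Let X be a locally complete ordered set with a bottom element. A morphism f in the category Ord ×_Set Fam(X) (the pullback of the forgetful functors Ord → Set and Fam(X) → Set) is an effective descent morphism if and only if its image ρ₁(f) under the projection to Ord is an effective descent morphism in Ord and its image ρ₂(f) under the projection to Fam(X) is an effective descent morphism in Fam(X). -/

import Mathlib

open CategoryTheory Limits

universe u
universe u₁ v₁ u₂ v₂

attribute [local instance] CategoryTheory.ConcreteCategory.instFunLike

namespace Desc

/-! ### Order-theoretic notions for preorders ("ordered sets") -/

/-- `x ≅ y`: equivalence in a preorder. -/
def EquivLE {X : Type u} [Preorder X] (x y : X) : Prop := x ≤ y ∧ y ≤ x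

/-- `m` is a binary meet (greatest lower bound) of `y` and `z`. -/
def IsMeet {X : Type u} [Preorder X] (y z m : X) : Prop :=
  m ≤ y ∧ m ≤ z ∧ ∀ u, u ≤ y → u ≤ z → u ≤ m

/-- `j` is a join (least upper bound) of the subset `S` computed in the down-set `↓x`. -/
def IsLocalJoin {X : Type u} [Preorder X] (x : X) (S : Set X) (j : X) : Prop :=
  j ≤ x ∧ (∀ s ∈ S, s ≤ j) ∧ ∀ u, u ≤ x → (∀ s ∈ S, s ≤ u) → j ≤ u

/-- `X` is locally complete: every subset of a down-set `↓x` has a join in `↓x`. -/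
def LocallyComplete (X : Type u) [Preorder X] : Prop :=
  ∀ x : X, ∀ S : Set X, (∀ s ∈ S, s ≤ x) → ∃ j, IsLocalJoin x S j

/-- `X` is complete: every subset has a join (least upper bound). -/
def CompleteOrd (X : Type u) [Preorder X] : Prop :=
  ∀ S : Set X, ∃ j, IsLUB S j

/-- `X` locally has binary meets: each down-set `↓x` has binary meets
(these are automatically meets in `X` of the pair). -/
def LocallyBinaryMeets (X : Type u) [Preorder X] : Prop :=
  ∀ x y z : X, y ≤ x → z ≤ x → ∃ m, IsMeet y z m

/-- `X` is locally cartesian closed: each down-set `↓x` has binary meets and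
exponentials `z^y` satisfying `w ∧ y ≤ z ↔ w ≤ z^y`. -/
def LocallyCartesianClosed (X : Type u) [Preorder X] : Prop :=
  LocallyBinaryMeets X ∧
    ∀ x y z : X, y ≤ x → z ≤ x →
      ∃ e, e ≤ x ∧ ∀ w, w ≤ x → ((∃ m, IsMeet w y m ∧ m ≤ z) ↔ w ≤ e)

theorem LocallyComplete.meets {X : Type u} [Preorder X] (h : LocallyComplete X) :
    LocallyBinaryMeets X := by
  intro x y z hy hz
  obtain ⟨j, hj⟩ := h x {u | u ≤ y ∧ u ≤ z} (fun s hs => hs.1.trans hy)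
  exact ⟨j, hj.2.2 y hy (fun s hs => hs.1), hj.2.2 z hz (fun s hs => hs.2),
    fun u h1 h2 => hj.2.1 u ⟨h1, h2⟩⟩

theorem CompleteOrd.meets {X : Type u} [Preorder X] (h : CompleteOrd X) :
    LocallyBinaryMeets X := by
  intro _ y z _ _
  obtain ⟨j, hj⟩ := h {u | u ≤ y ∧ u ≤ z}
  exact ⟨j, hj.2 (fun u hu => hu.1), hj.2 (fun u hu => hu.2),
    fun u h1 h2 => hj.1 ⟨h1, h2⟩⟩

/-! ### Descent-theoretic notions -/

/-- A morphism `f : A ⟶ B` in a category with pullbacks is an *effective descent morphism*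
if the comparison functor from `𝒜/B` to the Eilenberg–Moore category of the monad induced on
`𝒜/A` by the adjunction `f_! ⊣ f*` is an equivalence, i.e. `f*` is monadic. -/
def IsEffectiveDescentMorphism {C : Type*} [Category C] [HasPullbacks C]
    {A B : C} (f : A ⟶ B) : Prop :=
  (Monad.comparison (Over.mapPullbackAdj f)).IsEquivalence

/-- A morphism `f : A ⟶ B` in a category with pullbacks is a *descent morphism*
if the comparison functor from `𝒜/B` to the Eilenberg–Moore category of the monad induced on
`𝒜/A` by the adjunction `f_! ⊣ f*` is fully faithful. -/
def IsDescentMorphism {C : Type*} [Category C] [HasPullbacks C]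
    {A B : C} (f : A ⟶ B) : Prop :=
  (Monad.comparison (Over.mapPullbackAdj f)).Full ∧
    (Monad.comparison (Over.mapPullbackAdj f)).Faithful

/-- A morphism `f : A ⟶ B` is a (pullback-)stable regular epimorphism if every pullback of it
(along any `g : Z ⟶ B`) is a regular epimorphism. -/
def IsStableRegularEpi {C : Type*} [Category C] [HasPullbacks C]
    {A B : C} (f : A ⟶ B) : Prop :=
  ∀ ⦃Z : C⦄ (g : Z ⟶ B), Nonempty (RegularEpi (pullback.snd f g))



section PreordPullbacks

instance : HasPullbacks Preord.{u} := by
  have key : ∀ {A B C : Preord.{u}} (f : A ⟶ C) (g : B ⟶ C), HasLimit (cospan f g) := by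
    intro A B C f g
    let P : Preord.{u} := Preord.of {p : A × B // f p.1 = g p.2}
    let fst : P ⟶ A := ConcreteCategory.ofHom ⟨fun p => p.1.1, fun _ _ h => h.1⟩
    let snd : P ⟶ B := ConcreteCategory.ofHom ⟨fun p => p.1.2, fun _ _ h => h.2⟩
    have eq : fst ≫ f = snd ≫ g := ConcreteCategory.hom_ext _ _ (fun p => p.2)
    refine HasLimit.mk ⟨_, PullbackCone.IsLimit.mk eq
      (fun s => ConcreteCategory.ofHom ⟨fun d => ⟨(s.fst d, s.snd d),
        congrFun (congrArg (fun (h : s.pt ⟶ C) => (h : s.pt → C)) s.condition) d⟩,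
        fun _ _ h => ⟨s.fst.hom.monotone h, s.snd.hom.monotone h⟩⟩)
      (fun s => rfl) (fun s => rfl) (fun s m h1 h2 => ?_)⟩
    apply ConcreteCategory.hom_ext
    intro d
    apply Subtype.ext
    exact Prod.ext (congrFun (congrArg (fun (h : s.pt ⟶ A) => (h : s.pt → A)) h1) d)
      (congrFun (congrArg (fun (h : s.pt ⟶ B) => (h : s.pt → B)) h2) d)
  exact @hasPullbacks_of_hasLimit_cospan _ _ (fun {A B C f g} => key f g)

instance : HasPullbacks PartOrd.{u} := by
  have key : ∀ {A B C : PartOrd.{u}} (f : A ⟶ C) (g : B ⟶ C), HasLimit (cospan f g) := by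
    intro A B C f g
    let P : PartOrd.{u} := PartOrd.of {p : A × B // f p.1 = g p.2}
    let fst : P ⟶ A := ConcreteCategory.ofHom ⟨fun p => p.1.1, fun _ _ h => h.1⟩
    let snd : P ⟶ B := ConcreteCategory.ofHom ⟨fun p => p.1.2, fun _ _ h => h.2⟩
    have eq : fst ≫ f = snd ≫ g := ConcreteCategory.hom_ext _ _ (fun p => p.2)
    refine HasLimit.mk ⟨_, PullbackCone.IsLimit.mk eq
      (fun s => ConcreteCategory.ofHom ⟨fun d => ⟨(s.fst d, s.snd d),
        congrFun (congrArg (fun (h : s.pt ⟶ C) => (h : s.pt → C)) s.condition) d⟩,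
        fun _ _ h => ⟨s.fst.hom.monotone h, s.snd.hom.monotone h⟩⟩)
      (fun s => rfl) (fun s => rfl) (fun s m h1 h2 => ?_)⟩
    apply ConcreteCategory.hom_ext
    intro d
    apply Subtype.ext
    exact Prod.ext (congrFun (congrArg (fun (h : s.pt ⟶ A) => (h : s.pt → A)) h1) d)
      (congrFun (congrArg (fun (h : s.pt ⟶ B) => (h : s.pt → B)) h2) d)
  exact @hasPullbacks_of_hasLimit_cospan _ _ (fun {A B C f g} => key f g)

end PreordPullbacks



variable (X : Type u) [Preorder X]

/-! ### The lax comma category `Ord // X` -/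

/-- Objects of the lax comma category `Ord // X`: an ordered set `A` together with a
monotone map `α : A → X`. -/
structure OrdComma : Type (u + 1) where
  carrier : Type u
  [str : Preorder carrier]
  map : carrier → X
  mono : Monotone map

attribute [instance] OrdComma.str

variable {X}

/-- Morphisms in `Ord // X`: monotone maps `f` with `α(a) ≤ β(f(a))`. -/
@[ext]
structure OrdCommaHom (A B : OrdComma X) : Type u where
  toFun : A.carrier → B.carrier
  mono : Monotone toFun
  le : ∀ a, A.map a ≤ B.map (toFun a)

instance : Category (OrdComma X) where
  Hom := OrdCommaHom
  id A := ⟨id, monotone_id, fun _ => le_refl _⟩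
  comp f g := ⟨OrdCommaHom.toFun g ∘ OrdCommaHom.toFun f,
    (OrdCommaHom.mono g).comp (OrdCommaHom.mono f),
    fun a => (OrdCommaHom.le f a).trans (OrdCommaHom.le g _)⟩
  id_comp _ := rfl
  comp_id _ := rfl
  assoc _ _ _ := rfl

/-- The underlying function of a morphism in `Ord // X`. -/
def OrdComma.app {A B : OrdComma X} (f : A ⟶ B) : A.carrier → B.carrier :=
  OrdCommaHom.toFun f

/-! ### The category `Fam(X)` of set-indexed families of elements of `X` -/

variable (X) in
/-- Objects of `Fam(X)`: families `(α_j)_{j ∈ J}` of elements of `X`. -/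
structure FamCat : Type (u + 1) where
  idx : Type u
  val : idx → X

/-- Morphisms in `Fam(X)`: functions `f : J → K` with `α_j ≤ β_{f(j)}`. -/
@[ext]
structure FamHom (A B : FamCat X) : Type u where
  toFun : A.idx → B.idx
  le : ∀ j, A.val j ≤ B.val (toFun j)

instance : Category (FamCat X) where
  Hom := FamHom
  id A := ⟨id, fun _ => le_refl _⟩
  comp f g := ⟨FamHom.toFun g ∘ FamHom.toFun f,
    fun a => (FamHom.le f a).trans (FamHom.le g _)⟩
  id_comp _ := rfl
  comp_id _ := rfl
  assoc _ _ _ := rfl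

/-- The underlying function of a morphism in `Fam(X)`. -/
def FamCat.app {A B : FamCat X} (f : A ⟶ B) : A.idx → B.idx :=
  FamHom.toFun f

/-! ### The category `Ord ×_Set Fam(X)` -/

variable (X) in
/-- Objects of `Ord ×_Set Fam(X)`: an ordered set `C` with an arbitrary function
`χ : C → X`. -/
structure OrdFam : Type (u + 1) where
  carrier : Type u
  [str : Preorder carrier]
  map : carrier → X

attribute [instance] OrdFam.str

/-- Morphisms in `Ord ×_Set Fam(X)`: monotone maps `f` with `χ(c) ≤ ψ(f(c))`. -/
@[ext]
structure OrdFamHom (A B : OrdFam X) : Type u where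
  toFun : A.carrier → B.carrier
  mono : Monotone toFun
  le : ∀ a, A.map a ≤ B.map (toFun a)

instance : Category (OrdFam X) where
  Hom := OrdFamHom
  id A := ⟨id, monotone_id, fun _ => le_refl _⟩
  comp f g := ⟨OrdFamHom.toFun g ∘ OrdFamHom.toFun f,
    (OrdFamHom.mono g).comp (OrdFamHom.mono f),
    fun a => (OrdFamHom.le f a).trans (OrdFamHom.le g _)⟩
  id_comp _ := rfl
  comp_id _ := rfl
  assoc _ _ _ := rfl

/-! ### Functors between these categories -/

variable (X) in
/-- The forgetful functor `Ord // X ⥤ Ord`. -/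
def ordCommaForget : OrdComma X ⥤ Preord.{u} where
  obj A := Preord.of A.carrier
  map f := ConcreteCategory.ofHom (C := Preord) ⟨OrdCommaHom.toFun f, OrdCommaHom.mono f⟩
  map_id _ := rfl
  map_comp _ _ := rfl

variable (X) in
/-- The forgetful functor `Ord // X ⥤ Fam(X)`, `(A, α) ↦ (α(a))_{a ∈ A}`. -/
def ordCommaToFam : OrdComma X ⥤ FamCat X where
  obj A := ⟨A.carrier, A.map⟩
  map f := ⟨OrdCommaHom.toFun f, OrdCommaHom.le f⟩
  map_id _ := rfl
  map_comp _ _ := rfl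

variable (X) in
/-- The projection `ρ₁ : Ord ×_Set Fam(X) ⥤ Ord`. -/
def rho₁ : OrdFam X ⥤ Preord.{u} where
  obj A := Preord.of A.carrier
  map f := ConcreteCategory.ofHom (C := Preord) ⟨OrdFamHom.toFun f, OrdFamHom.mono f⟩
  map_id _ := rfl
  map_comp _ _ := rfl

variable (X) in
/-- The projection `ρ₂ : Ord ×_Set Fam(X) ⥤ Fam(X)`. -/
def rho₂ : OrdFam X ⥤ FamCat X where
  obj A := ⟨A.carrier, A.map⟩
  map f := ⟨OrdFamHom.toFun f, OrdFamHom.le f⟩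
  map_id _ := rfl
  map_comp _ _ := rfl

/-! ### Restrictions `f_x : A_x → B_x` -/

/-- For `(A, α)` in `Ord // X` and `x ∈ X`, the ordered set `A_x = {a ∈ A : x ≤ α(a)}`. -/
def OrdComma.fiber (A : OrdComma X) (x : X) : Preord.{u} :=
  Preord.of {a : A.carrier // x ≤ A.map a}

/-- The restriction `f_x : A_x → B_x` of a morphism `f : (A, α) ⟶ (B, β)` of `Ord // X`. -/
def OrdComma.fiberMap {A B : OrdComma X} (f : A ⟶ B) (x : X) :
    A.fiber x ⟶ B.fiber x :=
  ConcreteCategory.ofHom (C := Preord) ⟨fun a => ⟨OrdCommaHom.toFun f a.1, a.2.trans (OrdCommaHom.le f a.1)⟩,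
    fun _ _ h => OrdCommaHom.mono f h⟩



variable {X : Type u} [Preorder X]

theorem OrdComma.hasPullbacks (hm : LocallyBinaryMeets X) :
    HasPullbacks (OrdComma X) := by
  have key : ∀ {A B C : OrdComma X} (f : A ⟶ C) (g : B ⟶ C), HasLimit (cospan f g) := by
    intro A B C f g
    have hmeet : ∀ p : {p : A.carrier × B.carrier //
        OrdCommaHom.toFun f p.1 = OrdCommaHom.toFun g p.2},
        ∃ m, IsMeet (A.map p.1.1) (B.map p.1.2) m := fun p =>
      hm (C.map (OrdCommaHom.toFun f p.1.1)) _ _ (OrdCommaHom.le f p.1.1)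
        (by rw [p.2]; exact OrdCommaHom.le g p.1.2)
    choose μ hμ using hmeet
    let P : OrdComma X :=
      { carrier := {p : A.carrier × B.carrier //
          OrdCommaHom.toFun f p.1 = OrdCommaHom.toFun g p.2}
        map := μ
        mono := fun p q h => by
          have hpq : p.1 ≤ q.1 := h
          exact (hμ q).2.2 _ ((hμ p).1.trans (A.mono (Prod.le_def.mp hpq).1))
            ((hμ p).2.1.trans (B.mono (Prod.le_def.mp hpq).2)) }
    let pfst : P ⟶ A := ⟨fun p => p.1.1, fun _ _ h => h.1, fun p => (hμ p).1⟩
    let psnd : P ⟶ B := ⟨fun p => p.1.2, fun _ _ h => h.2, fun p => (hμ p).2.1⟩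
    have eq : pfst ≫ f = psnd ≫ g := OrdCommaHom.ext (funext fun p => p.2)
    refine HasLimit.mk ⟨_, PullbackCone.IsLimit.mk eq
      (fun s => ⟨fun d => ⟨(OrdCommaHom.toFun s.fst d, OrdCommaHom.toFun s.snd d),
          congrFun (congrArg OrdCommaHom.toFun s.condition) d⟩,
        fun _ _ h => ⟨OrdCommaHom.mono s.fst h, OrdCommaHom.mono s.snd h⟩,
        fun d => (hμ _).2.2 _ (OrdCommaHom.le s.fst d) (OrdCommaHom.le s.snd d)⟩)
      (fun s => rfl) (fun s => rfl) (fun s m h1 h2 => ?_)⟩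
    apply OrdCommaHom.ext
    funext d
    exact Subtype.ext (Prod.ext (congrFun (congrArg OrdCommaHom.toFun h1) d)
      (congrFun (congrArg OrdCommaHom.toFun h2) d))
  exact @hasPullbacks_of_hasLimit_cospan _ _ (fun {A B C f g} => key f g)

theorem FamCat.hasPullbacks (hm : LocallyBinaryMeets X) :
    HasPullbacks (FamCat X) := by
  have key : ∀ {A B C : FamCat X} (f : A ⟶ C) (g : B ⟶ C), HasLimit (cospan f g) := by
    intro A B C f g
    have hmeet : ∀ p : {p : A.idx × B.idx // FamHom.toFun f p.1 = FamHom.toFun g p.2},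
        ∃ m, IsMeet (A.val p.1.1) (B.val p.1.2) m := fun p =>
      hm (C.val (FamHom.toFun f p.1.1)) _ _ (FamHom.le f p.1.1)
        (by rw [p.2]; exact FamHom.le g p.1.2)
    choose μ hμ using hmeet
    let P : FamCat X :=
      { idx := {p : A.idx × B.idx // FamHom.toFun f p.1 = FamHom.toFun g p.2}
        val := μ }
    let pfst : P ⟶ A := ⟨fun p => p.1.1, fun p => (hμ p).1⟩
    let psnd : P ⟶ B := ⟨fun p => p.1.2, fun p => (hμ p).2.1⟩
    have eq : pfst ≫ f = psnd ≫ g := FamHom.ext (funext fun p => p.2)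
    refine HasLimit.mk ⟨_, PullbackCone.IsLimit.mk eq
      (fun s => ⟨fun d => ⟨(FamHom.toFun s.fst d, FamHom.toFun s.snd d),
          congrFun (congrArg FamHom.toFun s.condition) d⟩,
        fun d => (hμ _).2.2 _ (FamHom.le s.fst d) (FamHom.le s.snd d)⟩)
      (fun s => rfl) (fun s => rfl) (fun s m h1 h2 => ?_)⟩
    apply FamHom.ext
    funext d
    exact Subtype.ext (Prod.ext (congrFun (congrArg FamHom.toFun h1) d)
      (congrFun (congrArg FamHom.toFun h2) d))
  exact @hasPullbacks_of_hasLimit_cospan _ _ (fun {A B C f g} => key f g)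

theorem OrdFam.hasPullbacks (hm : LocallyBinaryMeets X) :
    HasPullbacks (OrdFam X) := by
  have key : ∀ {A B C : OrdFam X} (f : A ⟶ C) (g : B ⟶ C), HasLimit (cospan f g) := by
    intro A B C f g
    have hmeet : ∀ p : {p : A.carrier × B.carrier //
        OrdFamHom.toFun f p.1 = OrdFamHom.toFun g p.2},
        ∃ m, IsMeet (A.map p.1.1) (B.map p.1.2) m := fun p =>
      hm (C.map (OrdFamHom.toFun f p.1.1)) _ _ (OrdFamHom.le f p.1.1)
        (by rw [p.2]; exact OrdFamHom.le g p.1.2)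
    choose μ hμ using hmeet
    let P : OrdFam X :=
      { carrier := {p : A.carrier × B.carrier //
          OrdFamHom.toFun f p.1 = OrdFamHom.toFun g p.2}
        map := μ }
    let pfst : P ⟶ A := ⟨fun p => p.1.1, fun _ _ h => h.1, fun p => (hμ p).1⟩
    let psnd : P ⟶ B := ⟨fun p => p.1.2, fun _ _ h => h.2, fun p => (hμ p).2.1⟩
    have eq : pfst ≫ f = psnd ≫ g := OrdFamHom.ext (funext fun p => p.2)
    refine HasLimit.mk ⟨_, PullbackCone.IsLimit.mk eq
      (fun s => ⟨fun d => ⟨(OrdFamHom.toFun s.fst d, OrdFamHom.toFun s.snd d),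
          congrFun (congrArg OrdFamHom.toFun s.condition) d⟩,
        fun _ _ h => ⟨OrdFamHom.mono s.fst h, OrdFamHom.mono s.snd h⟩,
        fun d => (hμ _).2.2 _ (OrdFamHom.le s.fst d) (OrdFamHom.le s.snd d)⟩)
      (fun s => rfl) (fun s => rfl) (fun s m h1 h2 => ?_)⟩
    apply OrdFamHom.ext
    funext d
    exact Subtype.ext (Prod.ext (congrFun (congrArg OrdFamHom.toFun h1) d)
      (congrFun (congrArg OrdFamHom.toFun h2) d))
  exact @hasPullbacks_of_hasLimit_cospan _ _ (fun {A B C f g} => key f g)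



variable (X : Type u) [Preorder X]

/-- The set of connected components of an ordered set `X`: the quotient of `X` by the
equivalence relation generated by `≤` (zigzags). -/
def ConnComp : Type u := Quot (fun a b : X => a ≤ b)

/-- The connected component of `X` corresponding to `i`, as an ordered set. -/
def Component (i : ConnComp X) : Type u :=
  {x : X // Quot.mk (fun a b : X => a ≤ b) x = i}

instance (i : ConnComp X) : Preorder (Component X i) :=
  Subtype.preorder _

/-- The comparison functor `Ord // X ⥤ ∏_{i ∈ I} Ord // X_i`, where `(X_i)_{i ∈ I}` are the
connected components of `X`: it sends `(A, α)` to the family of (co)restrictions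
`(A_i, α_i : A_i → X_i)` with `A_i = α⁻¹(X_i)`. -/
def componentFunctor : OrdComma X ⥤ (∀ i : ConnComp X, OrdComma (Component X i)) where
  obj A := fun i =>
    { carrier := {a : A.carrier // Quot.mk (fun a b : X => a ≤ b) (A.map a) = i}
      map := fun a => ⟨A.map a.1, a.2⟩
      mono := fun _ _ h => A.mono h }
  map {A B} f := fun i =>
    { toFun := fun a => ⟨OrdCommaHom.toFun f a.1,
        (Quot.sound (OrdCommaHom.le f a.1)).symm.trans a.2⟩
      mono := fun _ _ h => OrdCommaHom.mono f h
      le := fun a => OrdCommaHom.le f a.1 }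
  map_id A := by
    funext i
    apply OrdCommaHom.ext
    funext a
    rfl
  map_comp f g := by
    funext i
    apply OrdCommaHom.ext
    funext a
    rfl




/-!
Being an effective descent morphism does not depend on the choice of pullbacks, so the comparison
functors `K`, `K₁`, `K₂` of `f`, `ρ₁ f`, `ρ₂ f` may be computed with explicit pullbacks; in
`Ord ×_Set Fam(X)` and in `Fam(X)` the label of a point `(n, a)` of a pullback is the meet of the
labels of `n` and `a`, which exists because `↓x` is complete.

Labelling an ordered set by the bottom element, resp. ordering a family by pulling back the
order of the base, embeds `Ord / ρ₁ B`, resp. `Fam(X) / ρ₂ B`, fully faithfully into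
`(Ord ×_Set Fam(X)) / B`, and these embeddings commute with pulling back along `f` (meets with
the bottom are the bottom; the pullback of an induced order is induced because `f` is monotone).
Together with the functors that `ρ₁` and `ρ₂` induce on algebras, this exhibits `K₁` and `K₂` as
retracts of `K`, so they are equivalences when `K` is.

Conversely, fullness of `K₁` forces `f` to be surjective, which makes `K` faithful. Given an
algebra or a morphism of algebras over `f`, descend its image under `ρ₁` through `K₁` and its
image under `ρ₂` through `K₂`. The two results match along their underlying sets, because a
morphism of algebras out of a comparison algebra is determined by its value at one point of each
fibre of `f`; gluing the order of the first with the labels of the second descends the original.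
-/

section Monadicity

variable {C D : Type*} [Category C] [Category D]

theorem comparison_isEquivalence_of_adjunction {L : C ⥤ D} {R R' : D ⥤ C}
    (adj : L ⊣ R) (adj' : L ⊣ R') [(Monad.comparison adj).IsEquivalence] :
    (Monad.comparison adj').IsEquivalence := by
  let e : R ≅ R' := Adjunction.rightAdjointUniq adj adj'
  have counit_comm : ∀ N : D, R.map (adj.counit.app N) ≫ e.hom.app N =
      e.hom.app (L.obj (R.obj N)) ≫ R'.map (L.map (e.hom.app N)) ≫
        R'.map (adj'.counit.app N) := by
    intro N
    rw [← R'.map_comp, Adjunction.rightAdjointUniq_hom_app_counit]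
    exact e.hom.naturality _
  let eM : adj.toMonad ≅ adj'.toMonad := MonadIso.mk (Functor.isoWhiskerLeft L e)
    (fun _ => by simp [e, Adjunction.toMonad])
    (fun _ => by
      dsimp [Adjunction.toMonad]
      rw [counit_comm, Category.assoc, ← e.hom.naturality_assoc])
  refine Functor.isEquivalence_of_iso (F := Monad.comparison adj ⋙
    (Monad.algebraEquivOfIsoMonads eM).functor) (NatIso.ofComponents
      (fun N => Monad.Algebra.isoMk (e.app N) ?_) fun g => by ext1; exact e.hom.naturality g)
  change R'.map (L.map (e.hom.app N)) ≫ R'.map (adj'.counit.app N) =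
    (e.inv.app (L.obj (R.obj N)) ≫ R.map (adj.counit.app N)) ≫ e.hom.app N
  rw [Category.assoc, counit_comm, Iso.inv_hom_id_app_assoc]

theorem comparison_isEquivalence_iff {L : C ⥤ D} {R R' : D ⥤ C} (adj : L ⊣ R) (adj' : L ⊣ R') :
    (Monad.comparison adj).IsEquivalence ↔ (Monad.comparison adj').IsEquivalence :=
  ⟨fun _ => comparison_isEquivalence_of_adjunction adj adj',
    fun _ => comparison_isEquivalence_of_adjunction adj' adj⟩

theorem Functor.isEquivalence_of_retract {D' E E' : Type*} [Category D'] [Category E]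
    [Category E'] {K : C ⥤ E} {K' : D' ⥤ E'} [K.IsEquivalence]
    (I : D' ⥤ C) [I.Full] [I.Faithful] (P : C ⥤ D') (J : E' ⥤ E) (Q : E ⥤ E')
    (eJ : J ⋙ Q ≅ 𝟭 E') (hI : I ⋙ K ≅ K' ⋙ J) (hP : K ⋙ Q ≅ P ⋙ K') :
    K'.IsEquivalence := by
  have : J.Faithful := Functor.Faithful.of_comp_iso eJ
  have : (K' ⋙ J).Faithful := Functor.Faithful.of_iso hI
  have : (K' ⋙ J).Full := Functor.Full.of_iso hI
  have : K'.Faithful := Functor.Faithful.of_comp K' J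
  have : K'.Full := Functor.Full.of_comp_faithful K' J
  refine { essSurj := ⟨fun y => ⟨P.obj (K.objPreimage (J.obj y)), ⟨?_⟩⟩⟩ }
  exact hP.symm.app _ ≪≫ Q.mapIso (K.objObjPreimageIso _) ≪≫ eJ.app y

end Monadicity

section Meet

variable {X}

open Classical in
noncomputable def meet (y z : X) : X := if h : ∃ m, IsMeet y z m then h.choose else y

variable (hm : LocallyBinaryMeets X) {x y z : X} (hy : y ≤ x) (hz : z ≤ x)
include hm hy hz

theorem isMeet_meet : IsMeet y z (meet y z) := by
  have h := hm x y z hy hz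
  rw [meet, dif_pos h]
  exact h.choose_spec

theorem meet_le_left : meet y z ≤ y := (isMeet_meet hm hy hz).1

theorem meet_le_right : meet y z ≤ z := (isMeet_meet hm hy hz).2.1

theorem le_meet {w : X} (h₁ : w ≤ y) (h₂ : w ≤ z) : w ≤ meet y z :=
  (isMeet_meet hm hy hz).2.2 w h₁ h₂

end Meet

namespace OrdFam

variable {X}

instance {A B : OrdFam X} : CoeFun (A ⟶ B) fun _ => A.carrier → B.carrier :=
  ⟨OrdFamHom.toFun⟩

@[ext]
theorem hom_ext {A B : OrdFam X} {g h : A ⟶ B} (H : ∀ a, g a = h a) : g = h :=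
  OrdFamHom.ext (funext H)

theorem over_w_apply {Z : OrdFam X} {M N : Over Z} (g : M ⟶ N) (a : M.left.carrier) :
    N.hom (g.left a) = M.hom a :=
  congrFun (congrArg OrdFamHom.toFun (Over.w g)) a

variable {A B : OrdFam X} {f : A ⟶ B}

noncomputable def pullbackObj (f : A ⟶ B) (N : Over B) : OrdFam X where
  carrier := Function.Pullback N.hom f
  map p := meet (N.left.map p.1.1) (A.map p.1.2)

theorem map_fst_le {N : Over B} (p : Function.Pullback N.hom f) :
    N.left.map p.1.1 ≤ B.map (f p.1.2) :=
  (OrdFamHom.le N.hom p.1.1).trans_eq (congrArg B.map p.2)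

theorem pullbackObj_map_le_left (hm : LocallyBinaryMeets X) {N : Over B}
    (p : Function.Pullback N.hom f) : (pullbackObj f N).map p ≤ N.left.map p.1.1 :=
  meet_le_left hm (map_fst_le p) (OrdFamHom.le f _)

theorem pullbackObj_map_le_right (hm : LocallyBinaryMeets X) {N : Over B}
    (p : Function.Pullback N.hom f) : (pullbackObj f N).map p ≤ A.map p.1.2 :=
  meet_le_right hm (map_fst_le p) (OrdFamHom.le f _)

theorem le_pullbackObj_map (hm : LocallyBinaryMeets X) {N : Over B}
    (p : Function.Pullback N.hom f) {w : X} (h₁ : w ≤ N.left.map p.1.1) (h₂ : w ≤ A.map p.1.2) :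
    w ≤ (pullbackObj f N).map p :=
  le_meet hm (map_fst_le p) (OrdFamHom.le f _) h₁ h₂

noncomputable def pullback (hm : LocallyBinaryMeets X) (f : A ⟶ B) : Over B ⥤ Over A where
  obj N := Over.mk (Y := pullbackObj f N)
    ⟨fun p => p.1.2, fun _ _ h => h.2, pullbackObj_map_le_right hm⟩
  map k := Over.homMk
    ⟨fun p => ⟨(k.left p.1.1, p.1.2), (over_w_apply k _).trans p.2⟩,
      fun _ _ h => ⟨OrdFamHom.mono k.left h.1, h.2⟩,
      fun p => le_pullbackObj_map hm _
        ((pullbackObj_map_le_left hm p).trans (OrdFamHom.le k.left _))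
        (pullbackObj_map_le_right hm p)⟩

noncomputable def mapPullbackAdj (hm : LocallyBinaryMeets X) (f : A ⟶ B) :
    Over.map f ⊣ pullback hm f :=
  Adjunction.mkOfHomEquiv
    { homEquiv M N :=
        { toFun h := Over.homMk
            ⟨fun m => ⟨(h.left m, M.hom m), over_w_apply h m⟩,
              fun _ _ hle => ⟨OrdFamHom.mono h.left hle, OrdFamHom.mono M.hom hle⟩,
              fun m => le_pullbackObj_map hm _ (OrdFamHom.le h.left m) (OrdFamHom.le M.hom m)⟩
          invFun k := Over.homMk
            ⟨fun m => (k.left m).1.1, fun _ _ hle => (OrdFamHom.mono k.left hle).1,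
              fun m => (OrdFamHom.le k.left m).trans (pullbackObj_map_le_left hm _)⟩
            (by ext m; exact (k.left m).2.trans (congrArg f (over_w_apply k m)))
          left_inv h := rfl
          right_inv k := by
            ext m; exact Subtype.ext (Prod.ext rfl (over_w_apply k m).symm) } }

end OrdFam

namespace Preord

theorem over_w_apply {Z : Preord.{u}} {M N : Over Z} (g : M ⟶ N) (a : M.left) :
    N.hom (g.left a) = M.hom a :=
  ConcreteCategory.congr_hom (Over.w g) a

variable {A B : Preord.{u}}

def pullback (f : A ⟶ B) : Over B ⥤ Over A where
  obj N := Over.mk (Y := Preord.of (Function.Pullback N.hom f))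
    (Preord.ofHom ⟨fun p => p.1.2, fun _ _ h => h.2⟩)
  map k := Over.homMk (Preord.ofHom
    ⟨fun p => ⟨(k.left p.1.1, p.1.2), (over_w_apply k _).trans p.2⟩,
      fun _ _ h => ⟨k.left.hom.monotone h.1, h.2⟩⟩)

def mapPullbackAdj (f : A ⟶ B) : Over.map f ⊣ pullback f :=
  Adjunction.mkOfHomEquiv
    { homEquiv M N :=
        { toFun h := Over.homMk (Preord.ofHom
            ⟨fun m => ⟨(h.left m, M.hom m), over_w_apply h m⟩,
              fun _ _ hle => ⟨h.left.hom.monotone hle, M.hom.hom.monotone hle⟩⟩)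
          invFun k := Over.homMk (Preord.ofHom
            ⟨fun m => (k.left m).1.1, fun _ _ hle => (k.left.hom.monotone hle).1⟩)
            (by ext m; exact (k.left m).2.trans (congrArg f (over_w_apply k m)))
          left_inv h := rfl
          right_inv k := by
            ext m; exact Subtype.ext (Prod.ext rfl (over_w_apply k m).symm) } }

end Preord

namespace FamCat

variable {X}

instance {A B : FamCat X} : CoeFun (A ⟶ B) fun _ => A.idx → B.idx :=
  ⟨FamHom.toFun⟩

@[ext]
theorem hom_ext {A B : FamCat X} {g h : A ⟶ B} (H : ∀ a, g a = h a) : g = h :=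
  FamHom.ext (funext H)

theorem over_w_apply {Z : FamCat X} {M N : Over Z} (g : M ⟶ N) (a : M.left.idx) :
    N.hom (g.left a) = M.hom a :=
  congrFun (congrArg FamHom.toFun (Over.w g)) a

variable {A B : FamCat X} {f : A ⟶ B}

noncomputable def pullbackObj (f : A ⟶ B) (N : Over B) : FamCat X where
  idx := Function.Pullback N.hom f
  val p := meet (N.left.val p.1.1) (A.val p.1.2)

theorem val_fst_le {N : Over B} (p : Function.Pullback N.hom f) :
    N.left.val p.1.1 ≤ B.val (f p.1.2) :=
  (FamHom.le N.hom p.1.1).trans_eq (congrArg B.val p.2)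

theorem pullbackObj_val_le_left (hm : LocallyBinaryMeets X) {N : Over B}
    (p : Function.Pullback N.hom f) : (pullbackObj f N).val p ≤ N.left.val p.1.1 :=
  meet_le_left hm (val_fst_le p) (FamHom.le f _)

theorem pullbackObj_val_le_right (hm : LocallyBinaryMeets X) {N : Over B}
    (p : Function.Pullback N.hom f) : (pullbackObj f N).val p ≤ A.val p.1.2 :=
  meet_le_right hm (val_fst_le p) (FamHom.le f _)

theorem le_pullbackObj_val (hm : LocallyBinaryMeets X) {N : Over B}
    (p : Function.Pullback N.hom f) {w : X} (h₁ : w ≤ N.left.val p.1.1) (h₂ : w ≤ A.val p.1.2) :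
    w ≤ (pullbackObj f N).val p :=
  le_meet hm (val_fst_le p) (FamHom.le f _) h₁ h₂

noncomputable def pullback (hm : LocallyBinaryMeets X) (f : A ⟶ B) : Over B ⥤ Over A where
  obj N := Over.mk (Y := pullbackObj f N) ⟨fun p => p.1.2, pullbackObj_val_le_right hm⟩
  map k := Over.homMk
    ⟨fun p => ⟨(k.left p.1.1, p.1.2), (over_w_apply k _).trans p.2⟩,
      fun p => le_pullbackObj_val hm _
        ((pullbackObj_val_le_left hm p).trans (FamHom.le k.left _))
        (pullbackObj_val_le_right hm p)⟩

noncomputable def mapPullbackAdj (hm : LocallyBinaryMeets X) (f : A ⟶ B) :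
    Over.map f ⊣ pullback hm f :=
  Adjunction.mkOfHomEquiv
    { homEquiv M N :=
        { toFun h := Over.homMk
            ⟨fun m => ⟨(h.left m, M.hom m), over_w_apply h m⟩,
              fun m => le_pullbackObj_val hm _ (FamHom.le h.left m) (FamHom.le M.hom m)⟩
          invFun k := Over.homMk
            ⟨fun m => (k.left m).1.1,
              fun m => (FamHom.le k.left m).trans (pullbackObj_val_le_left hm _)⟩
            (by ext m; exact (k.left m).2.trans (congrArg f (over_w_apply k m)))
          left_inv h := rfl
          right_inv k := by
            ext m; exact Subtype.ext (Prod.ext rfl (over_w_apply k m).symm) } }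

end FamCat

namespace OrdFam

variable {X}

def homMk {C D : OrdFam X} (k₁ : (rho₁ X).obj C ⟶ (rho₁ X).obj D)
    (k₂ : (rho₂ X).obj C ⟶ (rho₂ X).obj D) (h : ∀ c, k₁ c = k₂ c) : C ⟶ D :=
  ⟨k₁, k₁.hom.monotone, fun c => (FamHom.le k₂ c).trans_eq (congrArg D.map (h c)).symm⟩

def isoMk {C D : OrdFam X} (e : (rho₁ X).obj C ≅ (rho₁ X).obj D)
    (h₁ : ∀ c, C.map c ≤ D.map (e.hom c)) (h₂ : ∀ d, D.map d ≤ C.map (e.inv d)) : C ≅ D where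
  hom := ⟨e.hom, e.hom.hom.monotone, h₁⟩
  inv := ⟨e.inv, e.inv.hom.monotone, h₂⟩
  hom_inv_id := by ext c; exact ConcreteCategory.congr_hom e.hom_inv_id c
  inv_hom_id := by ext d; exact ConcreteCategory.congr_hom e.inv_hom_id d

end OrdFam

noncomputable section

section Comparison

variable {X} (hm : LocallyBinaryMeets X) {A B : OrdFam X} (f : A ⟶ B)

abbrev descentMonad := (OrdFam.mapPullbackAdj hm f).toMonad
abbrev descentMonad₁ := (Preord.mapPullbackAdj ((rho₁ X).map f)).toMonad
abbrev descentMonad₂ := (FamCat.mapPullbackAdj hm ((rho₂ X).map f)).toMonad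

abbrev descentComparison := Monad.comparison (OrdFam.mapPullbackAdj hm f)
abbrev descentComparison₁ := Monad.comparison (Preord.mapPullbackAdj ((rho₁ X).map f))
abbrev descentComparison₂ := Monad.comparison (FamCat.mapPullbackAdj hm ((rho₂ X).map f))

def rho₁Algebra : (descentMonad hm f).Algebra ⥤ (descentMonad₁ f).Algebra where
  obj y :=
    { A := (Over.post (rho₁ X)).obj y.A
      a := Over.homMk ((rho₁ X).map y.a.left) (by ext p; exact OrdFam.over_w_apply y.a p)
      unit := by ext m; exact congr(($y.unit).left m)
      assoc := by ext p; exact congr(($y.assoc).left p) }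
  map φ := { f := (Over.post (rho₁ X)).map φ.f, h := by ext p; exact congr(($φ.h).left p) }

def rho₂Algebra : (descentMonad hm f).Algebra ⥤ (descentMonad₂ hm f).Algebra where
  obj y :=
    { A := (Over.post (rho₂ X)).obj y.A
      a := Over.homMk ((rho₂ X).map y.a.left) (by ext p; exact OrdFam.over_w_apply y.a p)
      unit := by ext m; exact congr(($y.unit).left m)
      assoc := by ext p; exact congr(($y.assoc).left p) }
  map φ := { f := (Over.post (rho₂ X)).map φ.f, h := by ext p; exact congr(($φ.h).left p) }

def comparisonCompRho₁Algebra :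
    descentComparison hm f ⋙ rho₁Algebra hm f ≅ Over.post (rho₁ X) ⋙ descentComparison₁ f :=
  NatIso.ofComponents fun _ => Iso.refl _

def comparisonCompRho₂Algebra :
    descentComparison hm f ⋙ rho₂Algebra hm f ≅ Over.post (rho₂ X) ⋙ descentComparison₂ hm f :=
  NatIso.ofComponents fun _ => Iso.refl _

end Comparison

section BottomLift

variable {X} {b₀ : X} (hb₀ : ∀ x, b₀ ≤ x)

def botLift (Z : OrdFam X) : Over ((rho₁ X).obj Z) ⥤ Over Z where
  obj V := Over.mk (Y := ⟨V.left, fun _ => b₀⟩) ⟨V.hom, V.hom.hom.monotone, fun _ => hb₀ _⟩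
  map k := Over.homMk ⟨k.left, k.left.hom.monotone, fun _ => le_rfl⟩
    (by ext; exact Preord.over_w_apply k _)

instance (Z : OrdFam X) : (botLift hb₀ Z).Full where
  map_surjective k := ⟨Over.homMk (Preord.ofHom ⟨k.left, OrdFamHom.mono k.left⟩)
    (by ext; exact OrdFam.over_w_apply k _), rfl⟩

instance (Z : OrdFam X) : (botLift hb₀ Z).Faithful where
  map_injective h := by ext a; exact congr(($h).left a)

variable (hm : LocallyBinaryMeets X) {A B : OrdFam X} (f : A ⟶ B)

def botLiftAlgebra : (descentMonad₁ f).Algebra ⥤ (descentMonad hm f).Algebra where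
  obj y :=
    { A := (botLift hb₀ A).obj y.A
      a := Over.homMk ⟨y.a.left, y.a.left.hom.monotone, OrdFam.pullbackObj_map_le_left hm⟩
        (by ext p; exact Preord.over_w_apply y.a p)
      unit := by ext m; exact congr(($y.unit).left m)
      assoc := by ext p; exact congr(($y.assoc).left p) }
  map φ := { f := (botLift hb₀ A).map φ.f, h := by ext p; exact congr(($φ.h).left p) }

def botLiftAlgebraCompRho₁Algebra : botLiftAlgebra hb₀ hm f ⋙ rho₁Algebra hm f ≅ 𝟭 _ :=
  NatIso.ofComponents fun _ => Iso.refl _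

def botLiftCompComparison :
    botLift hb₀ B ⋙ descentComparison hm f ≅ descentComparison₁ f ⋙ botLiftAlgebra hb₀ hm f :=
  NatIso.ofComponents fun _ => Monad.Algebra.isoMk (Over.isoMk (OrdFam.isoMk (Iso.refl _)
    (fun _ => OrdFam.pullbackObj_map_le_left hm _)
    (fun _ => OrdFam.le_pullbackObj_map hm _ le_rfl (hb₀ _))))

end BottomLift

section InducedLift

variable {X}

instance (Z : OrdFam X) : Preorder ((rho₂ X).obj Z).idx := inferInstanceAs (Preorder Z.carrier)

def inducedLift (Z : OrdFam X) : Over ((rho₂ X).obj Z) ⥤ Over Z where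
  obj V := Over.mk (Y := { carrier := V.left.idx, str := Preorder.lift V.hom, map := V.left.val })
    ⟨V.hom, fun _ _ h => h, FamHom.le V.hom⟩
  map {V V'} k := Over.homMk ⟨k.left, fun a b (h : V.hom a ≤ V.hom b) =>
    (FamCat.over_w_apply k a).trans_le (h.trans_eq (FamCat.over_w_apply k b).symm),
    FamHom.le k.left⟩ (by ext; exact FamCat.over_w_apply k _)

instance (Z : OrdFam X) : (inducedLift Z).Full where
  map_surjective k := ⟨Over.homMk ⟨OrdFamHom.toFun k.left, OrdFamHom.le k.left⟩
    (by ext; exact OrdFam.over_w_apply k _), rfl⟩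

instance (Z : OrdFam X) : (inducedLift Z).Faithful where
  map_injective h := by ext a; exact congr(($h).left a)

variable (hm : LocallyBinaryMeets X) {A B : OrdFam X} (f : A ⟶ B)

def inducedLiftAlgebra : (descentMonad₂ hm f).Algebra ⥤ (descentMonad hm f).Algebra where
  obj y :=
    { A := (inducedLift A).obj y.A
      a := Over.homMk ⟨FamHom.toFun y.a.left,
          fun p q h => (FamCat.over_w_apply y.a p).trans_le
            (h.2.trans_eq (FamCat.over_w_apply y.a q).symm),
          FamHom.le y.a.left⟩
        (by ext p; exact FamCat.over_w_apply y.a p)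
      unit := by ext m; exact congr(($y.unit).left m)
      assoc := by ext p; exact congr(($y.assoc).left p) }
  map φ := { f := (inducedLift A).map φ.f, h := by ext p; exact congr(($φ.h).left p) }

def inducedLiftAlgebraCompRho₂Algebra : inducedLiftAlgebra hm f ⋙ rho₂Algebra hm f ≅ 𝟭 _ :=
  NatIso.ofComponents fun _ => Iso.refl _

def inducedLiftCompComparison :
    inducedLift B ⋙ descentComparison hm f ≅ descentComparison₂ hm f ⋙ inducedLiftAlgebra hm f :=
  NatIso.ofComponents fun _ => Monad.Algebra.isoMk (Over.isoMk (OrdFam.isoMk (Preord.Iso.mk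
    { toEquiv := Equiv.refl _
      map_rel_iff' := fun {p q} =>
        ⟨fun h => ⟨(p.2.trans_le (OrdFamHom.mono f h)).trans_eq q.2.symm, h⟩, fun h => h.2⟩ })
    (fun _ => le_rfl) (fun _ => le_rfl)))

end InducedLift

section Converse

variable {X}

/-- If `b` is not in the image of `g`, the pullbacks of the point `b` and of `∅` are both empty,
so fullness would produce a morphism from the point to `∅`. -/
theorem Preord.surjective_of_full_comparison {A B : Preord.{u}} (g : A ⟶ B)
    [(Monad.comparison (Preord.mapPullbackAdj g)).Full] : Function.Surjective g := by
  intro b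
  by_contra hb
  push Not at hb
  let point : Over B := Over.mk (Preord.ofHom ⟨fun _ : PUnit.{u+1} => b, fun _ _ _ => le_rfl⟩)
  let empty : Over B := Over.mk (Preord.ofHom (⟨PEmpty.elim, fun x => x.elim⟩ : PEmpty.{u+1} →o B))
  have no_point (p : Function.Pullback point.hom g) : False := hb p.1.2 p.2.symm
  let ψ : (Monad.comparison (Preord.mapPullbackAdj g)).obj point ⟶
      (Monad.comparison (Preord.mapPullbackAdj g)).obj empty :=
    { f := Over.homMk (Preord.ofHom ⟨fun p => (no_point p).elim, fun p => (no_point p).elim⟩)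
        (by ext p; exact (no_point p).elim)
      h := by ext p; exact (no_point p.1.1).elim }
  exact (((Monad.comparison _).preimage ψ).left PUnit.unit).elim

variable {A B : OrdFam X} (hm : LocallyBinaryMeets X) {f : A ⟶ B}

theorem faithful_comparison_of_surjective (hf : Function.Surjective f) :
    (descentComparison hm f).Faithful where
  map_injective {M _ _ _} h := by
    ext m
    obtain ⟨a, ha⟩ := hf (M.hom m)
    exact congr((($h).f.left ⟨(m, a), ha.symm⟩).1.1)

theorem full_comparison_of_surjective (hf : Function.Surjective f)
    [(descentComparison₁ f).Full] [(descentComparison₂ hm f).Full] :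
    (descentComparison hm f).Full where
  map_surjective {M M'} ψ := by
    obtain ⟨k₁, hk₁⟩ := (descentComparison₁ f).map_surjective
      ((comparisonCompRho₁Algebra hm f).inv.app M ≫ (rho₁Algebra hm f).map ψ ≫
        (comparisonCompRho₁Algebra hm f).hom.app M')
    obtain ⟨k₂, hk₂⟩ := (descentComparison₂ hm f).map_surjective
      ((comparisonCompRho₂Algebra hm f).inv.app M ≫ (rho₂Algebra hm f).map ψ ≫
        (comparisonCompRho₂Algebra hm f).hom.app M')
    have same : ∀ m, k₁.left m = k₂.left m := by
      intro m
      obtain ⟨a, ha⟩ := hf (M.hom m)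
      exact congr((($hk₁).f.left ⟨(m, a), ha.symm⟩).1.1).trans
        congr((($hk₂).f.left ⟨(m, a), ha.symm⟩).1.1).symm
    refine ⟨Over.homMk (OrdFam.homMk k₁.left k₂.left same)
      (by ext m; exact Preord.over_w_apply k₁ m), ?_⟩
    ext p
    exact Subtype.ext (Prod.ext congr((($hk₁).f.left p).1.1) (OrdFam.over_w_apply ψ.f p).symm)

end Converse

section Descent

variable {X}

theorem Preord.comparison_hom_apply {A B : Preord.{u}} {g : A ⟶ B} {N : Over B}
    {y : (Preord.mapPullbackAdj g).toMonad.Algebra}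
    (φ : (Monad.comparison (Preord.mapPullbackAdj g)).obj N ⟶ y) {x : N.left} {a a' : A}
    (h : N.hom x = g a) (h' : N.hom x = g a') :
    φ.f.left ⟨(x, a'), h'⟩ = y.a.left ⟨(φ.f.left ⟨(x, a), h⟩, a'),
      (congrArg g (Preord.over_w_apply φ.f _)).trans (h.symm.trans h')⟩ :=
  congr((($φ.h).left ⟨(⟨(x, a), h⟩, a'), h.symm.trans h'⟩)).symm

theorem FamCat.comparison_hom_apply (hm : LocallyBinaryMeets X) {A B : FamCat X} {g : A ⟶ B}
    {N : Over B} {y : (FamCat.mapPullbackAdj hm g).toMonad.Algebra}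
    (φ : (Monad.comparison (FamCat.mapPullbackAdj hm g)).obj N ⟶ y) {x : N.left.idx}
    {a a' : A.idx} (h : N.hom x = g a) (h' : N.hom x = g a') :
    φ.f.left ⟨(x, a'), h'⟩ = y.a.left ⟨(φ.f.left ⟨(x, a), h⟩, a'),
      (congrArg g (FamCat.over_w_apply φ.f _)).trans (h.symm.trans h')⟩ :=
  congr((($φ.h).left ⟨(⟨(x, a), h⟩, a'), h.symm.trans h'⟩)).symm

variable {A B : OrdFam X} {hm : LocallyBinaryMeets X} {f : A ⟶ B} (hf : Function.Surjective f)
  {y : (descentMonad hm f).Algebra}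
  {M₁ : Over ((rho₁ X).obj B)} (Θ₁ : (descentComparison₁ f).obj M₁ ≅ (rho₁Algebra hm f).obj y)
  {M₂ : Over ((rho₂ X).obj B)} (Θ₂ : (descentComparison₂ hm f).obj M₂ ≅ (rho₂Algebra hm f).obj y)

def basePoint (m : M₁.left) : Function.Pullback M₁.hom ((rho₁ X).map f) :=
  ⟨(m, Function.surjInv hf (M₁.hom m)), (Function.surjInv_eq hf _).symm⟩

def descentIndex (m : M₁.left) : M₂.left.idx :=
  (Θ₂.inv.f.left (Θ₁.hom.f.left (basePoint hf m))).1.1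

theorem hom_descentIndex (m : M₁.left) : M₂.hom (descentIndex hf Θ₁ Θ₂ m) = M₁.hom m :=
  ((Θ₂.inv.f.left _).2.trans (congrArg f ((FamCat.over_w_apply Θ₂.inv.f _).trans
    (Preord.over_w_apply Θ₁.hom.f _)))).trans (Function.surjInv_eq hf _)

theorem hom_descentIndex_basePoint (m : M₁.left) :
    Θ₂.hom.f.left ⟨(descentIndex hf Θ₁ Θ₂ m, Function.surjInv hf (M₁.hom m)),
      (hom_descentIndex hf Θ₁ Θ₂ m).trans (Function.surjInv_eq hf _).symm⟩ =
      Θ₁.hom.f.left (basePoint hf m) := by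
  have h : Θ₂.inv.f.left (Θ₁.hom.f.left (basePoint hf m)) =
      ⟨(descentIndex hf Θ₁ Θ₂ m, Function.surjInv hf (M₁.hom m)),
        (hom_descentIndex hf Θ₁ Θ₂ m).trans (Function.surjInv_eq hf _).symm⟩ :=
    Subtype.ext (Prod.ext rfl ((FamCat.over_w_apply Θ₂.inv.f _).trans
      (Preord.over_w_apply Θ₁.hom.f _)))
  rw [← h]
  exact congr(($Θ₂.inv_hom_id).f.left (Θ₁.hom.f.left (basePoint hf m)))

/-- Both sides are obtained by acting with `y` on their values at the base point. -/
theorem hom_descentIndex_apply (m : M₁.left) (a : A.carrier) (h : M₁.hom m = f a) :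
    Θ₂.hom.f.left ⟨(descentIndex hf Θ₁ Θ₂ m, a), (hom_descentIndex hf Θ₁ Θ₂ m).trans h⟩ =
      Θ₁.hom.f.left ⟨(m, a), h⟩ := by
  refine (FamCat.comparison_hom_apply hm Θ₂.hom
    ((hom_descentIndex hf Θ₁ Θ₂ m).trans (Function.surjInv_eq hf _).symm) _).trans
    (Eq.trans ?_ (Preord.comparison_hom_apply Θ₁.hom (basePoint hf m).2 h).symm)
  exact congrArg y.a.left (Subtype.ext (Prod.ext (hom_descentIndex_basePoint hf Θ₁ Θ₂ m) rfl))

theorem inv_apply_eq_descentIndex (n : y.A.left.carrier) :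
    Θ₂.inv.f.left n = ⟨(descentIndex hf Θ₁ Θ₂ (Θ₁.inv.f.left n).1.1, (Θ₁.inv.f.left n).1.2),
      (hom_descentIndex hf Θ₁ Θ₂ _).trans (Θ₁.inv.f.left n).2⟩ :=
  (congrArg Θ₂.inv.f.left ((hom_descentIndex_apply hf Θ₁ Θ₂ _ _ _).trans
    congr(($Θ₁.inv_hom_id).f.left n))).symm.trans congr(($Θ₂.hom_inv_id).f.left _)

def descendedObj : Over B :=
  Over.mk (Y := { carrier := M₁.left, map := fun m => M₂.left.val (descentIndex hf Θ₁ Θ₂ m) })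
    ⟨M₁.hom, M₁.hom.hom.monotone, fun m => (FamHom.le M₂.hom _).trans_eq
      (congrArg B.map (hom_descentIndex hf Θ₁ Θ₂ m))⟩

def descendedIso : (descentComparison hm f).obj (descendedObj hf Θ₁ Θ₂) ≅ y :=
  Monad.Algebra.isoMk (Over.isoMk (OrdFam.isoMk ((Monad.forget _ ⋙ Over.forget _).mapIso Θ₁)
      (fun p => (FamHom.le Θ₂.hom.f.left ⟨(descentIndex hf Θ₁ Θ₂ p.1.1, p.1.2), _⟩).trans_eq
        (congrArg y.A.left.map (hom_descentIndex_apply hf Θ₁ Θ₂ p.1.1 p.1.2 p.2)))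
      (fun n => (FamHom.le Θ₂.inv.f.left n).trans_eq
        (congrArg (FamCat.pullbackObj _ M₂).val (inv_apply_eq_descentIndex hf Θ₁ Θ₂ n))))
    (by ext p; exact Preord.over_w_apply Θ₁.hom.f p))
    (by ext p; exact congr(($Θ₁.hom.h).left p))

end Descent

variable {X} in
theorem essSurj_comparison_of_surjective {A B : OrdFam X} (hm : LocallyBinaryMeets X)
    {f : A ⟶ B} (hf : Function.Surjective f)
    [(descentComparison₁ f).EssSurj] [(descentComparison₂ hm f).EssSurj] :
    (descentComparison hm f).EssSurj where
  mem_essImage y := ⟨descendedObj hf (Functor.objObjPreimageIso _ ((rho₁Algebra hm f).obj y))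
    (Functor.objObjPreimageIso _ ((rho₂Algebra hm f).obj y)), ⟨descendedIso hf _ _⟩⟩

end

/-- **Lemma.** For `X` locally complete with a bottom element, a morphism `f` in the category
`Ord ×_Set Fam(X)` is an effective descent morphism iff `ρ₁(f)` is an effective descent
morphism in `Ord` and `ρ₂(f)` is an effective descent morphism in `Fam(X)`. -/
theorem statement12 {X : Type u} [Preorder X] (hX : LocallyComplete X)
    (hbot : ∃ b : X, ∀ x : X, b ≤ x)
    {A B : OrdFam X} (f : A ⟶ B) :
    @IsEffectiveDescentMorphism (OrdFam X) _ (OrdFam.hasPullbacks hX.meets) _ _ f ↔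
      (IsEffectiveDescentMorphism ((rho₁ X).map f) ∧
        @IsEffectiveDescentMorphism (FamCat X) _ (FamCat.hasPullbacks hX.meets) _ _
          ((rho₂ X).map f)) := by
  obtain ⟨b₀, hb₀⟩ := hbot
  have hm := hX.meets
  unfold IsEffectiveDescentMorphism
  rw [comparison_isEquivalence_iff _ (OrdFam.mapPullbackAdj hm f),
    comparison_isEquivalence_iff _ (Preord.mapPullbackAdj ((rho₁ X).map f)),
    comparison_isEquivalence_iff _ (FamCat.mapPullbackAdj hm ((rho₂ X).map f))]
  constructor
  · intro _
    exact ⟨Functor.isEquivalence_of_retract (botLift hb₀ B) (Over.post (rho₁ X))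
        (botLiftAlgebra hb₀ hm f) (rho₁Algebra hm f) (botLiftAlgebraCompRho₁Algebra hb₀ hm f)
        (botLiftCompComparison hb₀ hm f) (comparisonCompRho₁Algebra hm f),
      Functor.isEquivalence_of_retract (inducedLift B) (Over.post (rho₂ X))
        (inducedLiftAlgebra hm f) (rho₂Algebra hm f) (inducedLiftAlgebraCompRho₂Algebra hm f)
        (inducedLiftCompComparison hm f) (comparisonCompRho₂Algebra hm f)⟩
  · rintro ⟨_, _⟩
    have hf := Preord.surjective_of_full_comparison ((rho₁ X).map f)
    exact { faithful := faithful_comparison_of_surjective hm hf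
            full := full_comparison_of_surjective hm hf
            essSurj := essSurj_comparison_of_surjective hm hf }

end Desc
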